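/- Let d ≥ 1 and let F : ℝ^d ⇒ ℝ^d be a cyclically quasi-monotone multi-map with full domain. For every x ∈ ℝ^d, the set C^F(x) = {w : w ⪯_F x} is closed and convex; in fact C^F(x) is the intersection of the closed half-spaces {z : (z − w)·p ≤ 0} over all pairs (w, p) with p ∈ F(w) and w not satisfying w ≺_F x. -/

import Mathlib

open scoped RealInnerProductSpace

/-- Cyclic quasi-monotonicity of a multi-map `F : ℝ^d ⇒ ℝ^d`. -/
def CyclicallyQuasiMonotone {d : ℕ}
    (F : EuclideanSpace ℝ (Fin d) → Set (EuclideanSpace ℝ (Fin d))) : Prop :=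
  ∀ (N : ℕ) (x p : ℕ → EuclideanSpace ℝ (Fin d)),
    0 < N → x N = x 0 → (∀ i < N, p i ∈ F (x i)) →
    ∃ i < N, ⟪p i, x (i + 1) - x i⟫ ≤ 0

/-- `x 0, …, x N` is an `F`-ascending path. -/
def AscendingPath {d : ℕ} (F : EuclideanSpace ℝ (Fin d) → Set (EuclideanSpace ℝ (Fin d)))
    (x : ℕ → EuclideanSpace ℝ (Fin d)) (N : ℕ) : Prop :=
  ∀ i < N, ∃ p ∈ F (x i), 0 < ⟪p, x (i + 1) - x i⟫

/-- `a ≺_F b`: there is an `F`-ascending path from `a` to `b`. -/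
def PrecF {d : ℕ} (F : EuclideanSpace ℝ (Fin d) → Set (EuclideanSpace ℝ (Fin d)))
    (a b : EuclideanSpace ℝ (Fin d)) : Prop :=
  ∃ (N : ℕ) (x : ℕ → EuclideanSpace ℝ (Fin d)),
    0 < N ∧ x 0 = a ∧ x N = b ∧ AscendingPath F x N

/-- `a ⪯_F b`: `{w : w ≺_F a} ⊆ {w : w ≺_F b}`. -/
def PreceqF {d : ℕ} (F : EuclideanSpace ℝ (Fin d) → Set (EuclideanSpace ℝ (Fin d)))
    (a b : EuclideanSpace ℝ (Fin d)) : Prop :=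
  ∀ w, PrecF F w a → PrecF F w b

/-- The convex set `C^F(x) = {w : w ⪯_F x}`. -/
def CF {d : ℕ} (F : EuclideanSpace ℝ (Fin d) → Set (EuclideanSpace ℝ (Fin d)))
    (x : EuclideanSpace ℝ (Fin d)) : Set (EuclideanSpace ℝ (Fin d)) :=
  {w | PreceqF F w x}

/-!
`≺_F` is the transitive closure of the one-step relation "some `p ∈ F w` has `⟪p, z - w⟫ > 0`".
Hence `z ⪯_F x` holds iff no single ascending step leads to `z` from a point `w` with
`¬ w ≺_F x`: a longer ascending path into `z` may be cut at its last step, whose starting point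
must then satisfy `≺_F x`. The forbidden steps into `z` are exactly the open half-spaces
`⟪p, z - w⟫ > 0`, so `C^F(x)` is an intersection of closed half-spaces.
-/

section HalfSpace

variable {E : Type*} [NormedAddCommGroup E] [InnerProductSpace ℝ E]

lemma isClosed_setOf_inner_sub_nonpos (p w : E) : IsClosed {z : E | ⟪p, z - w⟫ ≤ 0} :=
  isClosed_le (continuous_const.inner (continuous_id.sub continuous_const)) continuous_const

lemma convex_setOf_inner_sub_nonpos (p w : E) : Convex ℝ {z : E | ⟪p, z - w⟫ ≤ 0} := by
  simp only [inner_sub_right, sub_nonpos]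
  exact convex_halfSpace_le (innerₛₗ ℝ p).isLinear _

end HalfSpace

def AscendingStep {d : ℕ} (F : EuclideanSpace ℝ (Fin d) → Set (EuclideanSpace ℝ (Fin d)))
    (w z : EuclideanSpace ℝ (Fin d)) : Prop :=
  ∃ p ∈ F w, 0 < ⟪p, z - w⟫

section Ascending

variable {d : ℕ} {F : EuclideanSpace ℝ (Fin d) → Set (EuclideanSpace ℝ (Fin d))}

lemma AscendingPath.transGen {x : ℕ → EuclideanSpace ℝ (Fin d)} {N : ℕ}
    (hx : AscendingPath F x N) (hN : 0 < N) :
    Relation.TransGen (AscendingStep F) (x 0) (x N) := by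
  induction N, hN using Nat.le_induction with
  | base => exact .single (hx 0 one_pos)
  | succ N hN ih =>
    exact .tail (ih fun i hi => hx i (by omega)) (hx N N.lt_succ_self)

lemma AscendingPath.update_succ {x : ℕ → EuclideanSpace ℝ (Fin d)} {N : ℕ}
    {c : EuclideanSpace ℝ (Fin d)} (hx : AscendingPath F x N) (hc : AscendingStep F (x N) c) :
    AscendingPath F (Function.update x (N + 1) c) (N + 1) := by
  intro i hi
  rw [Function.update_of_ne (by omega)]
  rcases Nat.lt_succ_iff_lt_or_eq.mp hi with hi | rfl
  · rw [Function.update_of_ne (by omega)]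
    exact hx i hi
  · rwa [Function.update_self]

lemma precF_iff_transGen {a b : EuclideanSpace ℝ (Fin d)} :
    PrecF F a b ↔ Relation.TransGen (AscendingStep F) a b := by
  constructor
  · rintro ⟨N, x, hN, rfl, rfl, hx⟩
    exact hx.transGen hN
  · intro h
    induction h with
    | single hab =>
      refine ⟨1, fun i => if i = 0 then a else _, one_pos, rfl, rfl, fun i hi => ?_⟩
      obtain rfl : i = 0 := by omega
      simpa [AscendingStep] using hab
    | tail _ hbc ih =>
      obtain ⟨N, x, hN, hx0, rfl, hx⟩ := ih
      exact ⟨N + 1, Function.update x (N + 1) _, N.succ_pos,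
        by rw [Function.update_of_ne (by omega), hx0], Function.update_self ..,
        hx.update_succ hbc⟩

end Ascending

lemma cF_eq_iInter {d : ℕ} (F : EuclideanSpace ℝ (Fin d) → Set (EuclideanSpace ℝ (Fin d)))
    (x : EuclideanSpace ℝ (Fin d)) :
    CF F x = ⋂ (w : EuclideanSpace ℝ (Fin d)) (p ∈ F w) (_ : ¬ PrecF F w x),
      {z | ⟪p, z - w⟫ ≤ 0} := by
  ext z
  simp only [CF, PreceqF, Set.mem_ofPred_eq, Set.mem_iInter]
  constructor
  · intro hz w p hp hwx
    by_contra! hpos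
    exact hwx (hz w (precF_iff_transGen.mpr (.single ⟨p, hp, hpos⟩)))
  · intro hz w hwz
    obtain ⟨y, hwy, p, hp, hpos⟩ := Relation.TransGen.tail'_iff.mp (precF_iff_transGen.mp hwz)
    have hyx : PrecF F y x := by
      by_contra hyx
      exact (hz y p hp hyx).not_gt hpos
    exact precF_iff_transGen.mpr (.trans_right hwy (precF_iff_transGen.mp hyx))

theorem stmt7 (d : ℕ)
    (F : EuclideanSpace ℝ (Fin d) → Set (EuclideanSpace ℝ (Fin d)))
    (x : EuclideanSpace ℝ (Fin d)) :
    IsClosed (CF F x) ∧ Convex ℝ (CF F x) ∧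
    CF F x = ⋂ (w : EuclideanSpace ℝ (Fin d)) (p ∈ F w) (_ : ¬ PrecF F w x),
      {z | ⟪p, z - w⟫ ≤ 0} := by
  rw [cF_eq_iInter]
  refine ⟨?_, ?_, rfl⟩
  · exact isClosed_iInter fun w => isClosed_biInter fun p _ =>
      isClosed_iInter fun _ => isClosed_setOf_inner_sub_nonpos p w
  · exact convex_iInter fun w => convex_iInter₂ fun p _ =>
      convex_iInter fun _ => convex_setOf_inner_sub_nonpos p w
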